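/- arXiv:1502.00938 — 3 statements merged into one kernel-verified Lean document; each statement's English description precedes it below -/
import Mathlib

section
/- Dobinski's formula: for every natural number n, the n-th Bell number satisfies B_n = (1/e) * Σ_{m=0}^∞ m^n / m!. -/
/-!
Both `B_n` and `e⁻¹ ∑ m^n / m!` satisfy `a 0 = 1` and `a (n + 1) = ∑ k ≤ n, (n choose k) a (n - k)`.
For partitions of `insert a s`, classify by the part `insert a t` containing `a`: deleting it
leaves an arbitrary partition of `s \ t`. For the series, shift `m = j + 1`, cancel one factor
`j + 1`, and expand `(1 + j)^n` binomially.
-/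

open scoped BigOperators

def bell (n : ℕ) : ℕ := Fintype.card (Finpartition (Finset.univ : Finset (Fin n)))

open Finset
open scoped Nat

namespace Finpartition

variable {α : Type*} [GeneralizedBooleanAlgebra α] [DecidableEq α] {a b : α}

theorem parts_avoid_of_mem (P : Finpartition a) (hb : b ∈ P.parts) :
    (P.avoid b).parts = P.parts.erase b := by
  ext c
  rw [mem_avoid, mem_erase]
  constructor
  · rintro ⟨d, hd, hdb, rfl⟩
    have hne : d ≠ b := by rintro rfl; exact hdb le_rfl
    have hdisj : Disjoint d b := P.disjoint hd hb hne
    rw [hdisj.sdiff_eq_left]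
    exact ⟨hne, hd⟩
  · rintro ⟨hcb, hc⟩
    have hdisj : Disjoint c b := P.disjoint hc hb hcb
    exact ⟨c, hc, fun hle => P.ne_bot hc (hdisj.eq_bot_of_le hle), hdisj.sdiff_eq_left⟩

def subtypeMemPartsEquiv (hb : b ≠ ⊥) (hba : b ≤ a) :
    {P : Finpartition a // b ∈ P.parts} ≃ Finpartition (a \ b) where
  toFun P := P.1.avoid b
  invFun Q := ⟨Q.extend hb disjoint_sdiff_self_left (sdiff_sup_cancel hba), mem_insert_self _ _⟩
  left_inv P := Subtype.ext <| Finpartition.ext <| by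
    simp only [extend_parts, parts_avoid_of_mem _ P.2, insert_erase P.2]
  right_inv Q := by
    have hbQ : b ∉ Q.parts := fun h => hb (disjoint_sdiff_self_right.eq_bot_of_le (Q.le h))
    ext1
    exact (parts_avoid_of_mem _ (mem_insert_self b Q.parts)).trans (erase_insert hbQ)

end Finpartition

section Finset

variable {α : Type*} [DecidableEq α]

theorem Finpartition.erase_part_eq_iff {a : α} {s t : Finset α} (P : Finpartition (insert a s))
    (hat : a ∉ t) : (P.part a).erase a = t ↔ insert a t ∈ P.parts := by
  constructor
  · rintro rfl
    rw [insert_erase (P.mem_part_self.2 (mem_insert_self a s))]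
    exact P.part_mem.2 (mem_insert_self a s)
  · intro ht
    rw [P.part_eq_of_mem ht (mem_insert_self a t), erase_insert hat]

theorem card_finpartition_insert {a : α} {s : Finset α} (ha : a ∉ s) :
    Fintype.card (Finpartition (insert a s)) =
      ∑ t ∈ s.powerset, Fintype.card (Finpartition (s \ t)) := by
  have hmaps : ∀ P ∈ (univ : Finset (Finpartition (insert a s))),
      (P.part a).erase a ∈ s.powerset := fun P _ =>
    mem_powerset.2 (subset_insert_iff.1 (P.part_subset a))
  rw [← card_univ, card_eq_sum_card_fiberwise hmaps]
  refine sum_congr rfl fun t ht => ?_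
  have hts : t ⊆ s := mem_powerset.1 ht
  have hat : a ∉ t := fun h => ha (hts h)
  calc #{P : Finpartition (insert a s) | (P.part a).erase a = t}
      = Fintype.card {P : Finpartition (insert a s) // insert a t ∈ P.parts} := by
        rw [Fintype.card_subtype]
        simp only [Finpartition.erase_part_eq_iff _ hat]
    _ = Fintype.card (Finpartition (insert a s \ insert a t)) :=
        Fintype.card_congr (Finpartition.subtypeMemPartsEquiv (insert_ne_empty a t)
          (insert_subset_insert a hts))
    _ = Fintype.card (Finpartition (s \ t)) := by
        rw [insert_sdiff_insert, sdiff_insert_of_notMem ha]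

theorem card_finpartition_eq_bell (s : Finset α) :
    Fintype.card (Finpartition s) = Nat.bell #s := by
  induction s using Finset.strongInduction with
  | H s ih =>
    rcases s.eq_empty_or_nonempty with rfl | ⟨a, ha⟩
    · rw [card_empty, Nat.bell_zero]
      exact Fintype.card_unique (α := Finpartition (⊥ : Finset α))
    rw [← insert_erase ha, card_finpartition_insert (notMem_erase a s),
      card_insert_of_notMem (notMem_erase a s), Nat.bell_succ, ← Nat.range_succ_eq_Iic]
    set s' := s.erase a
    calc ∑ t ∈ s'.powerset, Fintype.card (Finpartition (s' \ t))
        = ∑ t ∈ s'.powerset, Nat.bell (#s' - #t) := sum_congr rfl fun t ht => by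
          rw [ih _ (sdiff_subset.trans_ssubset (erase_ssubset ha)),
            card_sdiff_of_subset (mem_powerset.1 ht)]
      _ = _ := sum_powerset_apply_card (fun k => Nat.bell (#s' - k))

end Finset

theorem cast_succ_pow_succ_div_factorial_succ (n j : ℕ) :
    ((j + 1 : ℕ) : ℝ) ^ (n + 1) / (j + 1)! =
      ∑ k ∈ Iic n, n.choose k * ((j : ℝ) ^ (n - k) / j !) := by
  have hj : ((j + 1 : ℕ) : ℝ) ≠ 0 := by positivity
  rw [Nat.factorial_succ, Nat.cast_mul, pow_succ', mul_div_mul_left _ _ hj, Nat.cast_succ,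
    add_comm, add_pow, sum_div, ← Nat.range_succ_eq_Iic]
  refine sum_congr rfl fun k _ => ?_
  rw [one_pow, one_mul, mul_comm, mul_div_assoc]

theorem hasSum_pow_div_factorial_bell (n : ℕ) :
    HasSum (fun m : ℕ => (m : ℝ) ^ n / m !) (Real.exp 1 * Nat.bell n) := by
  induction n using Nat.strong_induction_on with
  | _ n ih =>
    cases n with
    | zero => simpa [Real.exp_eq_exp_ℝ] using NormedSpace.expSeries_div_hasSum_exp (1 : ℝ)
    | succ n =>
      rw [← hasSum_nat_add_iff' 1, sum_range_one, Nat.cast_zero, zero_pow n.succ_ne_zero,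
        zero_div, sub_zero]
      simp_rw [cast_succ_pow_succ_div_factorial_succ, Nat.bell_succ, Nat.cast_sum, Nat.cast_mul,
        mul_sum]
      refine hasSum_sum fun k _ => ?_
      rw [mul_left_comm]
      exact (ih (n - k) (by omega)).mul_left _

/-- Dobinski's formula: `B_n = (1/e) ∑_{m ≥ 0} m^n / m!`. -/
theorem dobinski (n : ℕ) :
    (bell n : ℝ) = (1 / Real.exp 1) * ∑' m : ℕ, (m : ℝ) ^ n / (Nat.factorial m) := by
  rw [(hasSum_pow_div_factorial_bell n).tsum_eq, bell, card_finpartition_eq_bell, card_univ,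
    Fintype.card_fin, one_div, inv_mul_cancel_left₀ (Real.exp_ne_zero 1)]
end

section
/- The sum over all set partitions λ of {1,...,n} of the number of levels L(λ) equals (n-1)·B_{n-1}; equivalently, the expected number of levels of a uniformly random set partition of {1,...,n} is (n-1)·B_{n-1}/B_n. -/
/-!
Exchanging the two sums, it suffices to show that for each `i < n - 1` exactly `B_{n-1}` partitions
have `i` and `i + 1` in the same block. View partitions as equivalence relations: those relating
`i` and `i + 1` are exactly the pullbacks of equivalence relations on `Fin (n - 1)` along the
surjection `Fin.predAbove` that merges `i` and `i + 1`, and pulling back along a surjection is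
injective.
-/

open scoped BigOperators Classical

/-- The number of levels of a set partition of `{0, ..., n-1}`: the number of indices
`i ≤ n - 2` such that `i` and `i+1` lie in the same block. -/
noncomputable def levels {n : ℕ} (P : Finpartition (Finset.univ : Finset (Fin n))) : ℕ :=
  ((Finset.range (n - 1)).filter fun i =>
    ∃ b ∈ P.parts, ∃ (hi : i < n) (hj : i + 1 < n),
      (⟨i, hi⟩ : Fin n) ∈ b ∧ (⟨i + 1, hj⟩ : Fin n) ∈ b).card

open Finset

namespace Finpartition

variable {α : Type*} [DecidableEq α] {s : Finset α}

theorem parts_eq_image_part (P : Finpartition s) : P.parts = s.image P.part := by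
  ext t
  constructor
  · intro ht
    simpa using P.part_surjOn ht
  · rw [mem_image]
    rintro ⟨a, ha, rfl⟩
    exact P.part_mem.2 (by simpa using ha)

theorem ext_part {P Q : Finpartition s} (h : P.part = Q.part) : P = Q :=
  Finpartition.ext <| by rw [parts_eq_image_part, h, ← parts_eq_image_part]

theorem part_ofSetoid_ker_part [Fintype α] (P : Finpartition (univ : Finset α)) :
    (ofSetoid (Setoid.ker P.part)).part = P.part := by
  funext a
  ext b
  rw [mem_part_ofSetoid_iff_rel, Setoid.ker_def, eq_comm,
    P.mem_part_iff_part_eq_part (mem_univ b) (mem_univ a)]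

noncomputable def equivSetoid [Fintype α] : Finpartition (univ : Finset α) ≃ Setoid α where
  toFun P := Setoid.ker P.part
  invFun r := ofSetoid r
  left_inv P := ext_part (part_ofSetoid_ker_part P)
  right_inv r := by
    ext a b
    change (ofSetoid r).part a = (ofSetoid r).part b ↔ r a b
    rw [← (ofSetoid r).mem_part_iff_part_eq_part (mem_univ a) (mem_univ b),
      mem_part_ofSetoid_iff_rel]
    exact r.comm'

end Finpartition

namespace Setoid

variable {α β : Type*}

theorem ker_le_comap (f : α → β) (r : Setoid β) : ker f ≤ comap f r := fun a b h => by
  rw [comap_rel, ker_def.1 h]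

noncomputable def comapEquivOfSurjective {f : α → β} (hf : Function.Surjective f) :
    Setoid β ≃ {r : Setoid α // ker f ≤ r} :=
  Equiv.ofBijective (fun r => ⟨comap f r, ker_le_comap f r⟩)
    ⟨fun _ _ h => comap_injective f hf (congrArg Subtype.val h),
      fun r => ⟨r.1.map f, Subtype.ext (comap_map_of_ker_le f r.1 r.2)⟩⟩

end Setoid

namespace Fin

theorem ker_predAbove_le_iff {n : ℕ} (p : Fin n) (r : Setoid (Fin (n + 1))) :
    Setoid.ker p.predAbove ≤ r ↔ r p.castSucc p.succ := by
  constructor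
  · intro h
    exact h (by rw [Setoid.ker_def, predAbove_castSucc_self, predAbove_succ_self])
  · intro hr
    -- `(castSucc p).succAbove` is a section of `p.predAbove` picking the representative `succ p`
    have rel_section : ∀ a, r a ((castSucc p).succAbove (p.predAbove a)) := by
      intro a
      by_cases ha : a = castSucc p
      · subst ha
        rwa [predAbove_castSucc_self, succAbove_castSucc_self]
      · rw [succAbove_predAbove ha]
    intro a b hab
    rw [Setoid.ker_def] at hab
    exact r.trans (rel_section a) (hab ▸ r.symm (rel_section b))

end Fin

theorem card_filter_part_castSucc_eq_part_succ {n : ℕ} (p : Fin n) :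
    #{P : Finpartition (univ : Finset (Fin (n + 1))) | P.part p.castSucc = P.part p.succ} =
      bell n := by
  rw [← Fintype.card_subtype]
  exact Fintype.card_congr <|
    (Finpartition.equivSetoid.subtypeEquiv fun P => Setoid.ker_def.symm).trans <|
    (Equiv.subtypeEquivRight fun r => (Fin.ker_predAbove_le_iff p r).symm).trans <|
    (Setoid.comapEquivOfSurjective (Fin.predAbove_surjective p)).symm.trans
      Finpartition.equivSetoid.symm

theorem levels_eq_card_filter {n : ℕ} (P : Finpartition (univ : Finset (Fin (n + 1)))) :
    levels P = #{p : Fin n | P.part p.castSucc = P.part p.succ} := by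
  have level_iff : ∀ p : Fin n, (∃ b ∈ P.parts,
      ∃ (hi : (p : ℕ) < n + 1) (hj : (p : ℕ) + 1 < n + 1),
        (⟨p, hi⟩ : Fin (n + 1)) ∈ b ∧ (⟨p + 1, hj⟩ : Fin (n + 1)) ∈ b) ↔
      P.part p.castSucc = P.part p.succ := by
    intro p
    rw [eq_comm, ← P.mem_part_iff_part_eq_part (mem_univ _) (mem_univ _), P.mem_part_iff_exists]
    exact ⟨fun ⟨b, hb, _, _, hx, hy⟩ => ⟨b, hb, hy, hx⟩,
      fun ⟨b, hb, hy, hx⟩ => ⟨b, hb, p.castSucc.isLt, p.succ.isLt, hx, hy⟩⟩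
  rw [levels, Nat.add_sub_cancel, card_filter, card_filter, ← Fin.sum_univ_eq_sum_range]
  simp only [level_iff]

/-- The total number of levels over all set partitions of an `n`-set is `(n-1)·B_{n-1}`;
equivalently the expected number of levels of a uniform set partition is
`(n-1)·B_{n-1}/B_n`. -/
theorem levels_sum (n : ℕ) :
    ∑ P : Finpartition (Finset.univ : Finset (Fin n)), levels P = (n - 1) * bell (n - 1) := by
  cases n with
  | zero => simp [levels]
  | succ n =>
    calc ∑ P, levels P
        = ∑ P : Finpartition (univ : Finset (Fin (n + 1))),
            #{p : Fin n | P.part p.castSucc = P.part p.succ} := by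
          simp only [levels_eq_card_filter]
      _ = ∑ p : Fin n, #{P : Finpartition (univ : Finset (Fin (n + 1)))
            | P.part p.castSucc = P.part p.succ} := by
          simp only [card_filter]
          exact sum_comm
      _ = n * bell n := by
          rw [sum_congr rfl fun p _ => card_filter_part_castSucc_eq_part_succ p, sum_const,
            card_univ, Fintype.card_fin, smul_eq_mul]
end

section
/- For a set partition λ of {1,...,n} generated by the sequential insertion procedure (elements 1,...,n assigned in order, with each non-minimal element assigned uniformly to one of the currently open blocks), the crossing number satisfies cr(λ) = Σ_k X_k, where for each non-minimal element k, X_k is uniform on {0,1,...,a_k−1}, a_k being the number of open blocks when k is inserted, and the X_k are independent given the sets of block minima and maxima. -/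
open scoped BigOperators Classical

/-- `x` and `y` lie in a common block of `P`. -/
def SameBlock {n : ℕ} (P : Finpartition (Finset.univ : Finset (Fin n))) (x y : Fin n) : Prop :=
  ∃ b ∈ P.parts, x ∈ b ∧ y ∈ b

/-- `x < y` are adjacent (consecutive) elements of a common block of `P`. -/
def Adj {n : ℕ} (P : Finpartition (Finset.univ : Finset (Fin n))) (x y : Fin n) : Prop :=
  x < y ∧ SameBlock P x y ∧ ∀ z, x < z → z < y → ¬ SameBlock P x z

/-- The number of crossings of `P`: quadruples `i < i' < j < j'` with `i, j` adjacent
elements of one block and `i', j'` adjacent elements of another block. -/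
noncomputable def crossings {n : ℕ} (P : Finpartition (Finset.univ : Finset (Fin n))) : ℕ :=
  ((Finset.univ : Finset (Fin n × Fin n × Fin n × Fin n)).filter fun q =>
    q.1 < q.2.1 ∧ q.2.1 < q.2.2.1 ∧ q.2.2.1 < q.2.2.2 ∧
      Adj P q.1 q.2.2.1 ∧ Adj P q.2.1 q.2.2.2).card

/-- The number of crossings of `P` whose second coordinate pair ends at `k`, i.e. crossings
`i < i' < j < j'` (with `(i, j)` and `(i', j')` the two adjacent pairs) having `j = k`. -/
noncomputable def crossingsAt {n : ℕ} (P : Finpartition (Finset.univ : Finset (Fin n)))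
    (k : Fin n) : ℕ :=
  ((Finset.univ : Finset (Fin n × Fin n × Fin n × Fin n)).filter fun q =>
    q.1 < q.2.1 ∧ q.2.1 < q.2.2.1 ∧ q.2.2.1 < q.2.2.2 ∧
      Adj P q.1 q.2.2.1 ∧ Adj P q.2.1 q.2.2.2 ∧ q.2.2.1 = k).card

/-- The set of minima of the blocks of `P`. -/
noncomputable def blockMins {n : ℕ} (P : Finpartition (Finset.univ : Finset (Fin n))) :
    Finset (Fin n) :=
  P.parts.attach.image fun b => b.1.min' (P.nonempty_of_mem_parts b.2)

/-- The set of maxima of the blocks of `P`. -/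
noncomputable def blockMaxs {n : ℕ} (P : Finpartition (Finset.univ : Finset (Fin n))) :
    Finset (Fin n) :=
  P.parts.attach.image fun b => b.1.max' (P.nonempty_of_mem_parts b.2)

/-- The number of blocks of `P` that are open when element `k` is inserted: blocks whose
minimum is `< k` and whose maximum is `≥ k`. -/
noncomputable def openBlocks {n : ℕ} (P : Finpartition (Finset.univ : Finset (Fin n)))
    (k : Fin n) : ℕ :=
  (P.parts.attach.filter fun b =>
    b.1.min' (P.nonempty_of_mem_parts b.2) < k ∧ k ≤ b.1.max' (P.nonempty_of_mem_parts b.2)).card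

/-!
Record a partition by the function sending each element to its predecessor in its block. When
`k` is inserted, the open blocks are represented by their current last elements
`m_1 < ⋯ < m_a`; if `k` joins the block ending at `m_i`, the crossings whose second pair ends at
`k` correspond to the open ends `m_j` with `j > i`, so `X_k = a - i`. Since
`a = #{minima < k} - #{maxima < k}`, the number of choices at each step depends only on the
minima and maxima. Given these, the values `X_k` therefore determine the predecessor function
one element at a time, and every admissible sequence of values is realised by the insertion
procedure.
-/

namespace Finpartition

variable {α : Type*} [DecidableEq α] {s : Finset α}

theorem ext_of_part_eq {P P' : Finpartition s} (h : ∀ a ∈ s, P.part a = P'.part a) :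
    P = P' := by
  ext t
  constructor
  · intro ht
    obtain ⟨a, ha, rfl⟩ := P.part_surjOn ht
    exact h a ha ▸ P'.part_mem.2 ha
  · intro ht
    obtain ⟨a, ha, rfl⟩ := P'.part_surjOn ht
    exact (h a ha).symm ▸ P.part_mem.2 ha

theorem injective_of_mem_parts {P : Finpartition s} {f : P.parts → α}
    (hf : ∀ b : P.parts, f b ∈ (b : Finset α)) : Function.Injective f :=
  fun b b' h => Subtype.ext (P.eq_of_mem_parts b.2 b'.2 (hf b) (h ▸ hf b'))

end Finpartition

namespace Finset

variable {α : Type*} [LinearOrder α] {s : Finset α} {c : ℕ}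

theorem strictAntiOn_card_filter_gt : StrictAntiOn (fun e => #{m ∈ s | e < m}) s := by
  intro a _ b hb hab
  refine card_lt_card ⟨fun m hm => ?_, fun hsub => ?_⟩
  · rw [mem_filter] at hm ⊢
    exact ⟨hm.1, hab.trans hm.2⟩
  · exact lt_irrefl b (mem_filter.1 (hsub (mem_filter.2 ⟨hb, hab⟩))).2

theorem card_filter_gt_lt_card {e : α} (he : e ∈ s) : #{m ∈ s | e < m} < #s :=
  card_lt_card (filter_ssubset.2 ⟨e, he, lt_irrefl e⟩)

theorem exists_mem_card_filter_gt_eq (hc : c < #s) : ∃ e ∈ s, #{m ∈ s | e < m} = c := by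
  have hsurj := surjOn_of_injOn_of_card_le (s := s) (t := range #s)
    (fun e => #{m ∈ s | e < m}) (fun e he => mem_range.2 (card_filter_gt_lt_card he))
    strictAntiOn_card_filter_gt.injOn (by rw [card_range])
  obtain ⟨e, he, hec⟩ := hsurj (mem_range.2 hc)
  exact ⟨e, he, hec⟩

noncomputable def elementWithAbove (s : Finset α) (c : ℕ) : Option α :=
  if h : ∃ e ∈ s, #{m ∈ s | e < m} = c then some h.choose else none

theorem elementWithAbove_eq_some_iff {e : α} :
    s.elementWithAbove c = some e ↔ e ∈ s ∧ #{m ∈ s | e < m} = c := by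
  unfold elementWithAbove
  split_ifs with h
  · obtain ⟨hmem, hcard⟩ := h.choose_spec
    rw [Option.some_inj]
    refine ⟨fun he => he ▸ h.choose_spec, fun ⟨he, hec⟩ => ?_⟩
    exact strictAntiOn_card_filter_gt.injOn hmem he (hcard.trans hec.symm)
  · simpa using fun he => h ⟨e, he⟩

end Finset

open Finset

section Partition

variable {n : ℕ} {Q Q' : Finpartition (univ : Finset (Fin n))} {i k m m' x y z : Fin n}

theorem sameBlock_iff_mem_part : SameBlock Q x y ↔ x ∈ Q.part y :=
  Q.mem_part_iff_exists.symm

theorem SameBlock.refl (Q : Finpartition (univ : Finset (Fin n))) (x : Fin n) :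
    SameBlock Q x x :=
  sameBlock_iff_mem_part.2 (Q.mem_part (mem_univ x))

theorem SameBlock.symm (h : SameBlock Q x y) : SameBlock Q y x := by
  obtain ⟨b, hb, hx, hy⟩ := h
  exact ⟨b, hb, hy, hx⟩

theorem SameBlock.trans (h : SameBlock Q x y) (h' : SameBlock Q y z) : SameBlock Q x z := by
  obtain ⟨b, hb, hx, hy⟩ := h
  obtain ⟨b', hb', hy', hz⟩ := h'
  exact ⟨b, hb, hx, Q.eq_of_mem_parts hb' hb hy' hy ▸ hz⟩

theorem Adj.left_unique (h : Adj Q m k) (h' : Adj Q m' k) : m = m' := by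
  by_contra hne
  rcases lt_or_gt_of_ne hne with hlt | hlt
  · exact h.2.2 m' hlt h'.1 (h.2.1.trans h'.2.1.symm)
  · exact h'.2.2 m hlt h.1 (h'.2.1.trans h.2.1.symm)

theorem Adj.right_unique (h : Adj Q k m) (h' : Adj Q k m') : m = m' := by
  by_contra hne
  rcases lt_or_gt_of_ne hne with hlt | hlt
  · exact h'.2.2 m h.1 hlt h.2.1
  · exact h.2.2 m' h'.1 hlt h'.2.1

theorem exists_adj_left_of_sameBlock (hx : x < k) (h : SameBlock Q x k) :
    ∃ m, Adj Q m k ∧ x ≤ m := by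
  set s : Finset (Fin n) := {z | z < k ∧ SameBlock Q z k}
  have hxs : x ∈ s := mem_filter.2 ⟨mem_univ x, hx, h⟩
  obtain ⟨hlt, hsb⟩ := (mem_filter.1 (s.max'_mem ⟨x, hxs⟩)).2
  refine ⟨s.max' ⟨x, hxs⟩, ⟨hlt, hsb, fun z hz hzk hz' => ?_⟩, s.le_max' x hxs⟩
  exact not_le.2 hz (s.le_max' z (mem_filter.2 ⟨mem_univ z, hzk, hz'.symm.trans hsb⟩))

theorem exists_adj_right_of_sameBlock (hx : k < x) (h : SameBlock Q k x) :
    ∃ m, Adj Q k m ∧ m ≤ x := by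
  set s : Finset (Fin n) := {z | k < z ∧ SameBlock Q k z}
  have hxs : x ∈ s := mem_filter.2 ⟨mem_univ x, hx, h⟩
  obtain ⟨hlt, hsb⟩ := (mem_filter.1 (s.min'_mem ⟨x, hxs⟩)).2
  refine ⟨s.min' ⟨x, hxs⟩, ⟨hlt, hsb, fun z hkz hz hz' => ?_⟩, s.min'_le x hxs⟩
  exact not_le.2 hz (s.min'_le z (mem_filter.2 ⟨mem_univ z, hkz, hz'⟩))

theorem mem_blockMins_iff : k ∈ blockMins Q ↔ ∀ m, ¬ Adj Q m k := by
  simp only [blockMins, mem_image, mem_attach, true_and, Subtype.exists, min'_eq_iff]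
  constructor
  · rintro ⟨b, hb, hkb, hmin⟩ m ⟨hmk, ⟨b', hb', hmb', hkb'⟩, -⟩
    exact not_le.2 hmk (hmin m (Q.eq_of_mem_parts hb' hb hkb' hkb ▸ hmb'))
  · intro h
    refine ⟨Q.part k, Q.part_mem.2 (mem_univ k), Q.mem_part (mem_univ k), fun x hx => ?_⟩
    by_contra! hxk
    obtain ⟨m, hm, -⟩ := exists_adj_left_of_sameBlock hxk (sameBlock_iff_mem_part.2 hx)
    exact h m hm

theorem mem_blockMaxs_iff : k ∈ blockMaxs Q ↔ ∀ x, ¬ Adj Q k x := by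
  simp only [blockMaxs, mem_image, mem_attach, true_and, Subtype.exists, max'_eq_iff]
  constructor
  · rintro ⟨b, hb, hkb, hmax⟩ x ⟨hkx, ⟨b', hb', hkb', hxb'⟩, -⟩
    exact not_le.2 hkx (hmax x (Q.eq_of_mem_parts hb' hb hkb' hkb ▸ hxb'))
  · intro h
    refine ⟨Q.part k, Q.part_mem.2 (mem_univ k), Q.mem_part (mem_univ k), fun x hx => ?_⟩
    by_contra! hkx
    obtain ⟨m, hm, -⟩ := exists_adj_right_of_sameBlock hkx (sameBlock_iff_mem_part.2 hx).symm
    exact h m hm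

end Partition

section Pred

variable {n : ℕ} {Q Q' : Finpartition (univ : Finset (Fin n))} {i k m x y : Fin n}

noncomputable def blockPred (Q : Finpartition (univ : Finset (Fin n))) (k : Fin n) :
    Option (Fin n) :=
  if h : ∃ m, Adj Q m k then some h.choose else none

theorem blockPred_eq_some_iff : blockPred Q k = some m ↔ Adj Q m k := by
  unfold blockPred
  split_ifs with h
  · exact ⟨fun he => Option.some_inj.1 he ▸ h.choose_spec,
      fun hm => congrArg some (h.choose_spec.left_unique hm)⟩
  · simpa using fun hm => h ⟨m, hm⟩

theorem blockPred_eq_none_iff : blockPred Q k = none ↔ k ∈ blockMins Q := by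
  rw [mem_blockMins_iff, ← not_exists, Option.eq_none_iff_forall_ne_some]
  simp only [ne_eq, blockPred_eq_some_iff, not_exists]

theorem sameBlock_of_blockPred_eq (h : blockPred Q = blockPred Q') (hxy : SameBlock Q x y) :
    SameBlock Q' x y := by
  wlog hlt : x < y generalizing x y
  · rcases (not_lt.1 hlt).eq_or_lt with rfl | hyx
    · exact SameBlock.refl Q' _
    · exact (this hxy.symm hyx).symm
  induction y using WellFoundedLT.induction generalizing x with
  | ind y ih =>
    obtain ⟨m, hm, hxm⟩ := exists_adj_left_of_sameBlock hlt hxy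
    have hm' : Adj Q' m y := blockPred_eq_some_iff.1 (h ▸ blockPred_eq_some_iff.2 hm)
    rcases hxm.eq_or_lt with rfl | hxm
    · exact hm'.2.1
    · exact (ih m hm.1 (hxy.trans hm.2.1.symm) hxm).trans hm'.2.1

theorem eq_of_blockPred_eq (h : blockPred Q = blockPred Q') : Q = Q' := by
  refine Finpartition.ext_of_part_eq fun y _ => ?_
  ext x
  rw [← sameBlock_iff_mem_part, ← sameBlock_iff_mem_part]
  exact ⟨sameBlock_of_blockPred_eq h, sameBlock_of_blockPred_eq h.symm⟩

end Pred

section PartitionOfPred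

variable {n : ℕ} {p : Fin n → Option (Fin n)} {hp : ∀ k m, p k = some m → m < k}
  {a b k m z : Fin n}

def Descends (p : Fin n → Option (Fin n)) : Fin n → Fin n → Prop :=
  Relation.ReflTransGen fun a b => p a = some b

noncomputable def chainRoot (p : Fin n → Option (Fin n)) (hp : ∀ k m, p k = some m → m < k)
    (k : Fin n) : Fin n :=
  match h : p k with
  | none => k
  | some m =>
    have : m < k := hp k m h
    chainRoot p hp m
termination_by (k : ℕ)

theorem chainRoot_of_eq_none (h : p k = none) : chainRoot p hp k = k := by
  rw [chainRoot]; split <;> simp_all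

theorem chainRoot_of_eq_some (h : p k = some m) : chainRoot p hp k = chainRoot p hp m := by
  rw [chainRoot]; split <;> simp_all

theorem Descends.le (hp : ∀ k m, p k = some m → m < k) (h : Descends p a b) : b ≤ a := by
  induction h with
  | refl => exact le_rfl
  | tail _ hstep ih => exact (hp _ _ hstep).le.trans ih

theorem Descends.chainRoot_eq (h : Descends p a b) : chainRoot p hp a = chainRoot p hp b := by
  induction h with
  | refl => rfl
  | tail _ hstep ih => exact ih.trans (chainRoot_of_eq_some hstep)

theorem descends_chainRoot (k : Fin n) : Descends p k (chainRoot p hp k) := by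
  induction k using WellFoundedLT.induction with
  | ind k ih =>
    cases hk : p k with
    | none => rw [chainRoot_of_eq_none hk]; exact Relation.ReflTransGen.refl
    | some m => rw [chainRoot_of_eq_some hk]; exact .head hk (ih m (hp k m hk))

theorem chainRoot_le (k : Fin n) : chainRoot p hp k ≤ k :=
  (descends_chainRoot k).le hp

variable (hinj : ∀ x x' m, p x = some m → p x' = some m → x = x')
include hinj

/-- Chains of an injective `p` do not merge, so a common root forces one chain. -/
theorem descends_of_chainRoot_eq (hzk : z < k) (h : chainRoot p hp z = chainRoot p hp k) :
    Descends p k z := by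
  induction k using WellFoundedLT.induction generalizing z with
  | ind k ih =>
    cases hk : p k with
    | none =>
      rw [chainRoot_of_eq_none hk] at h
      exact absurd (h ▸ chainRoot_le z) (not_le.2 hzk)
    | some m =>
      have hmk := hp k m hk
      rw [chainRoot_of_eq_some hk] at h
      rcases lt_trichotomy z m with hzm | rfl | hmz
      · exact .head hk (ih m hmk hzm h)
      · exact .single hk
      · rcases (ih z hzk hmz h.symm).cases_tail with rfl | ⟨w, hzw, hw⟩
        · exact absurd hmz (lt_irrefl _)
        · exact absurd ((hinj w k m hw hk) ▸ Descends.le hp hzw) (not_le.2 hzk)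

noncomputable def partitionOfPred (p : Fin n → Option (Fin n))
    (hp : ∀ k m, p k = some m → m < k) :
    Finpartition (univ : Finset (Fin n)) :=
  Finpartition.ofSetoid (Setoid.ker (chainRoot p hp))

omit hinj in
theorem sameBlock_partitionOfPred_iff :
    SameBlock (partitionOfPred p hp) a b ↔ chainRoot p hp a = chainRoot p hp b := by
  rw [sameBlock_iff_mem_part, partitionOfPred, Finpartition.mem_part_ofSetoid_iff_rel]
  exact eq_comm

theorem adj_partitionOfPred_iff : Adj (partitionOfPred p hp) m k ↔ p k = some m := by
  simp only [Adj, sameBlock_partitionOfPred_iff]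
  constructor
  · rintro ⟨hmk, hroot, hnext⟩
    rcases (descends_of_chainRoot_eq hinj hmk hroot).cases_head with rfl | ⟨b, hkb, hbm⟩
    · exact absurd hmk (lt_irrefl _)
    rcases (Descends.le hp hbm).eq_or_lt with rfl | hmb
    · exact hkb
    · exact absurd (Descends.chainRoot_eq hbm).symm (hnext b hmb (hp k b hkb))
  · intro hk
    refine ⟨hp k m hk, (chainRoot_of_eq_some hk).symm, fun z hmz hzk hroot => ?_⟩
    have hroot' := hroot.symm.trans (chainRoot_of_eq_some hk).symm
    rcases (descends_of_chainRoot_eq hinj hzk hroot').cases_head with rfl | ⟨b, hkb, hbz⟩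
    · exact lt_irrefl _ hzk
    · exact not_le.2 hmz (Option.some_inj.1 (hkb.symm.trans hk) ▸ Descends.le hp hbz)

theorem blockPred_partitionOfPred : blockPred (partitionOfPred p hp) = p := by
  funext k
  cases hk : p k with
  | none =>
    rw [Option.eq_none_iff_forall_ne_some]
    intro m hm
    simp [blockPred_eq_some_iff, adj_partitionOfPred_iff hinj, hk] at hm
  | some m => exact blockPred_eq_some_iff.2 ((adj_partitionOfPred_iff hinj).2 hk)

end PartitionOfPred

section OpenEnds

variable {n : ℕ} {X : Finset (Fin n)} {p p' : Fin n → Option (Fin n)} {t : ℕ} {m x x' : Fin n}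

/-- When `p` is the predecessor function of a partition and `X` its set of block maxima, these
are the last elements `m_1 < ⋯ < m_a` of the blocks open at time `t`. -/
def openEnds (X : Finset (Fin n)) (p : Fin n → Option (Fin n)) (t : ℕ) : Finset (Fin n) :=
  {m | (m : ℕ) < t ∧ m ∉ X ∧ ∀ x : Fin n, (x : ℕ) < t → p x ≠ some m}

theorem openEnds_congr (h : ∀ x : Fin n, (x : ℕ) < t → p x = p' x) :
    openEnds X p t = openEnds X p' t := by
  ext m
  simp +contextual only [openEnds, mem_filter, mem_univ, true_and, h]

variable (hp : ∀ x m, p x = some m → m ∈ openEnds X p x)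
include hp

theorem lt_of_mem_openEnds (h : p x = some m) : m < x :=
  (mem_filter.1 (hp x m h)).2.1

theorem eq_of_eq_some_of_mem_openEnds (h : p x = some m) (h' : p x' = some m) : x = x' := by
  by_contra hne
  rcases lt_or_gt_of_ne hne with hlt | hlt
  · exact (mem_filter.1 (hp x' m h')).2.2.2 x hlt h
  · exact (mem_filter.1 (hp x m h)).2.2.2 x' hlt h'

/-- Below time `t`, every non-maximum either still ends an open block or is the predecessor of
a unique element, and those elements are exactly the non-minima. -/
theorem card_openEnds_add_card_filter (t : ℕ) :
    #(openEnds X p t) + #(X.filter fun m : Fin n => (m : ℕ) < t)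
      = #{x : Fin n | ↑x < t ∧ p x = none} := by
  set B : Finset (Fin n) := univ.filter fun m => ↑m < t with hB
  set H : Fin n → Prop := fun m => ∀ x : Fin n, ↑x < t → p x ≠ some m with hH
  have hX : X.filter (fun m : Fin n => (m : ℕ) < t) = B.filter (· ∈ X) := by
    ext; simp [hB, and_comm]
  have hopen : openEnds X p t = (B.filter (· ∉ X)).filter H := by
    ext; simp [openEnds, hB, hH, and_assoc]
  have hnone : (univ.filter fun x : Fin n => ↑x < t ∧ p x = none) = B.filter (p · = none) := by
    rw [hB, filter_filter]
  have hsucc : #((B.filter (· ∉ X)).filter (¬ H ·)) = #(B.filter (¬ p · = none)) := by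
    symm
    refine card_nbij (fun x => (p x).getD x) (fun x hx => ?_) (fun x hx x' hx' he => ?_)
      (fun m hm => ?_)
    · simp only [mem_coe, hB, mem_filter, mem_univ, true_and] at hx
      obtain ⟨m, hm⟩ := Option.ne_none_iff_exists'.1 hx.2
      have := mem_filter.1 (hp x m hm)
      simp only [mem_coe, hB, hH, hm, Option.getD_some, mem_filter, mem_univ, true_and,
        not_forall, not_not]
      exact ⟨⟨by omega, this.2.2.1⟩, x, hx.1, hm⟩
    · simp only [mem_coe, mem_filter] at hx hx'
      obtain ⟨m, hm⟩ := Option.ne_none_iff_exists'.1 hx.2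
      obtain ⟨m', hm'⟩ := Option.ne_none_iff_exists'.1 hx'.2
      simp only [hm, hm', Option.getD_some] at he
      exact eq_of_eq_some_of_mem_openEnds hp hm (he ▸ hm')
    · simp only [mem_coe, hB, hH, mem_filter, mem_univ, true_and, not_forall, not_not] at hm
      obtain ⟨-, x, hxt, hx⟩ := hm
      exact ⟨x, by simp [hB, hxt, hx], by simp [hx]⟩
  have h1 := card_filter_add_card_filter_not (s := B) (· ∈ X)
  have h2 := card_filter_add_card_filter_not (s := B.filter (· ∉ X)) H
  have h3 := card_filter_add_card_filter_not (s := B) (p · = none)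
  rw [hX, hopen, hnone]
  omega

end OpenEnds

section Crossings

variable {n : ℕ} {Q : Finpartition (univ : Finset (Fin n))} {i k m x : Fin n}

theorem blockPred_mem_openEnds (x m : Fin n) (h : blockPred Q x = some m) :
    m ∈ openEnds (blockMaxs Q) (blockPred Q) x := by
  have hm := blockPred_eq_some_iff.1 h
  refine mem_filter.2 ⟨mem_univ m, hm.1, fun hmax => mem_blockMaxs_iff.1 hmax x hm, ?_⟩
  intro x' hx' h'
  exact hx'.ne (congrArg Fin.val (hm.right_unique (blockPred_eq_some_iff.1 h')).symm)

theorem mem_openEnds_blockPred_iff :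
    m ∈ openEnds (blockMaxs Q) (blockPred Q) k ↔ m < k ∧ ∃ x, k ≤ x ∧ Adj Q m x := by
  simp only [openEnds, mem_filter, mem_univ, true_and, mem_blockMaxs_iff, not_forall, not_not,
    ne_eq, blockPred_eq_some_iff]
  constructor
  · rintro ⟨hmk, ⟨x, hx⟩, hnext⟩
    exact ⟨hmk, x, not_lt.1 fun hxk => hnext x hxk hx, hx⟩
  · rintro ⟨hmk, x, hkx, hx⟩
    exact ⟨hmk, ⟨x, hx⟩, fun x' hx' h' => not_le.2 hx' (hx.right_unique h' ▸ hkx)⟩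

/-- A crossing `i < i' < k < j'` is determined by the open end `i'`. -/
theorem crossingsAt_eq_card_filter (h : Adj Q i k) :
    crossingsAt Q k = #{m ∈ openEnds (blockMaxs Q) (blockPred Q) k | i < m} := by
  refine card_nbij (fun q => q.2.1) (fun q hq => ?_) (fun q hq q' hq' he => ?_) (fun m hm => ?_)
  · obtain ⟨a, b, j, d⟩ := q
    simp only [mem_coe, mem_filter, mem_univ, true_and] at hq ⊢
    obtain ⟨hab, hbj, hjd, haj, hbd, rfl⟩ := hq
    exact ⟨mem_openEnds_blockPred_iff.2 ⟨hbj, d, hjd.le, hbd⟩, haj.left_unique h ▸ hab⟩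
  · obtain ⟨a, b, j, d⟩ := q
    obtain ⟨a', b', j', d'⟩ := q'
    simp only [mem_coe, mem_filter, mem_univ, true_and] at hq hq' he
    obtain ⟨-, -, -, haj, hbd, rfl⟩ := hq
    obtain ⟨-, -, -, haj', hbd', rfl⟩ := hq'
    subst he
    rw [haj.left_unique haj', hbd.right_unique hbd']
  · simp only [coe_filter, mem_openEnds_blockPred_iff] at hm
    obtain ⟨⟨hmk, x, hkx, hmx⟩, him⟩ := hm
    have hkx : k < x := hkx.lt_of_ne fun hkx => him.ne' (hmx.left_unique (hkx ▸ h))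
    exact ⟨(i, m, k, x), by simp [him, hmk, hkx, h, hmx], rfl⟩

theorem crossingsAt_eq_zero (hk : k ∈ blockMins Q) : crossingsAt Q k = 0 := by
  rw [crossingsAt, card_eq_zero, filter_eq_empty_iff]
  rintro ⟨a, b, j, d⟩ - ⟨-, -, -, haj, -, rfl⟩
  exact mem_blockMins_iff.1 hk a haj

theorem crossings_eq_sum (Q : Finpartition (univ : Finset (Fin n))) :
    crossings Q = ∑ k ∈ univ.filter (fun k : Fin n => k ∉ blockMins Q), crossingsAt Q k := by
  have hsupp : ∀ k ∈ univ, crossingsAt Q k ≠ 0 → k ∉ blockMins Q :=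
    fun k _ hk hmin => hk (crossingsAt_eq_zero hmin)
  rw [sum_filter_of_ne hsupp, crossings,
    card_eq_sum_card_fiberwise (f := fun q => q.2.2.1) (t := univ) fun _ _ => mem_univ _]
  refine sum_congr rfl fun k _ => ?_
  rw [crossingsAt, filter_filter]
  simp only [and_assoc]

end Crossings

section OpenBlocks

variable {n : ℕ} (Q : Finpartition (univ : Finset (Fin n))) (k : Fin n)

theorem card_filter_blockMins (q : Fin n → Prop) [DecidablePred q] :
    #((blockMins Q).filter q)
      = #(Q.parts.attach.filter fun b => q (b.1.min' (Q.nonempty_of_mem_parts b.2))) := by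
  rw [blockMins, filter_image, card_image_of_injective _
    (Finpartition.injective_of_mem_parts fun b => min'_mem _ _)]

theorem card_filter_blockMaxs (q : Fin n → Prop) [DecidablePred q] :
    #((blockMaxs Q).filter q)
      = #(Q.parts.attach.filter fun b => q (b.1.max' (Q.nonempty_of_mem_parts b.2))) := by
  rw [blockMaxs, filter_image, card_image_of_injective _
    (Finpartition.injective_of_mem_parts fun b => max'_mem _ _)]

theorem card_blockMins_eq_card_blockMaxs : #(blockMins Q) = #(blockMaxs Q) := by
  simpa using
    (card_filter_blockMins Q fun _ => True).trans (card_filter_blockMaxs Q fun _ => True).symm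

theorem openBlocks_add_card_filter_blockMaxs :
    openBlocks Q k + #((blockMaxs Q).filter (· < k)) = #((blockMins Q).filter (· < k)) := by
  have hsplit := card_filter_add_card_filter_not
    (s := Q.parts.attach.filter fun b => b.1.min' (Q.nonempty_of_mem_parts b.2) < k)
    (fun b => k ≤ b.1.max' (Q.nonempty_of_mem_parts b.2))
  rw [filter_filter, filter_filter] at hsplit
  rw [card_filter_blockMins, card_filter_blockMaxs, openBlocks, ← hsplit]
  congr 2
  refine filter_congr fun b _ => ⟨fun h => ⟨?_, not_le.2 h⟩, fun h => not_le.1 h.2⟩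
  exact (min'_le_max' _ _).trans_lt h

theorem openBlocks_congr {Q' : Finpartition (univ : Finset (Fin n))}
    (hmin : blockMins Q = blockMins Q') (hmax : blockMaxs Q = blockMaxs Q') :
    openBlocks Q k = openBlocks Q' k := by
  have := openBlocks_add_card_filter_blockMaxs Q k
  have := openBlocks_add_card_filter_blockMaxs Q' k
  rw [hmin, hmax] at *
  omega

end OpenBlocks

section Unique

variable {n : ℕ} {Q Q' : Finpartition (univ : Finset (Fin n))} {k : Fin n}

theorem card_openEnds_blockPred (Q : Finpartition (univ : Finset (Fin n))) (k : Fin n) :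
    #(openEnds (blockMaxs Q) (blockPred Q) k) = openBlocks Q k := by
  have hends := card_openEnds_add_card_filter (blockPred_mem_openEnds (Q := Q)) k
  have hmins : (univ.filter fun x : Fin n => ↑x < (k : ℕ) ∧ blockPred Q x = none)
      = (blockMins Q).filter (· < k) := by
    ext; simp [blockPred_eq_none_iff, and_comm]
  rw [hmins] at hends
  have := openBlocks_add_card_filter_blockMaxs Q k
  change _ + #((blockMaxs Q).filter (· < k)) = _ at hends
  omega

theorem exists_blockPred_eq_some (hk : k ∉ blockMins Q) : ∃ i, blockPred Q k = some i :=
  Option.ne_none_iff_exists'.1 (mt blockPred_eq_none_iff.1 hk)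

theorem crossingsAt_lt_openBlocks (hk : k ∉ blockMins Q) : crossingsAt Q k < openBlocks Q k := by
  obtain ⟨i, hi⟩ := exists_blockPred_eq_some hk
  rw [crossingsAt_eq_card_filter (blockPred_eq_some_iff.1 hi), ← card_openEnds_blockPred]
  exact card_filter_gt_lt_card (blockPred_mem_openEnds k i hi)

/-- Inserting the elements in increasing order, the crossing count at `k` pins down the open
block that receives `k`, the open blocks being known from the earlier insertions. -/
theorem eq_of_crossingsAt_eq (hmin : blockMins Q = blockMins Q')
    (hmax : blockMaxs Q = blockMaxs Q') (hcr : ∀ k, crossingsAt Q k = crossingsAt Q' k) :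
    Q = Q' := by
  refine eq_of_blockPred_eq (funext fun k => ?_)
  induction k using WellFoundedLT.induction with
  | ind k ih =>
    by_cases hk : k ∈ blockMins Q
    · rw [blockPred_eq_none_iff.2 hk, blockPred_eq_none_iff.2 (hmin ▸ hk)]
    obtain ⟨i, hi⟩ := exists_blockPred_eq_some hk
    obtain ⟨i', hi'⟩ := exists_blockPred_eq_some (hmin ▸ hk)
    have hends :
        openEnds (blockMaxs Q) (blockPred Q) k = openEnds (blockMaxs Q') (blockPred Q') k := by
      rw [hmax]; exact openEnds_congr fun x hx => ih x hx
    have hcount := hcr k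
    rw [crossingsAt_eq_card_filter (blockPred_eq_some_iff.1 hi),
      crossingsAt_eq_card_filter (blockPred_eq_some_iff.1 hi'), hends] at hcount
    rw [hi, hi', strictAntiOn_card_filter_gt.injOn (hends ▸ blockPred_mem_openEnds k i hi)
      (blockPred_mem_openEnds k i' hi') hcount]

end Unique

section Insertion

variable {n : ℕ} {M X : Finset (Fin n)} {c : Fin n → ℕ} {k e : Fin n}

/-- The insertion procedure with prescribed values `X_k = c k`: the elements of `M` open new
blocks, and the set of eventual block maxima `X` tells which blocks are still open. -/
noncomputable def insertionPred (M X : Finset (Fin n)) (c : Fin n → ℕ) (k : Fin n) :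
    Option (Fin n) :=
  if k ∈ M then none
  else
    (openEnds X (fun x => if x < k then insertionPred M X c x else none) k).elementWithAbove (c k)
termination_by (k : ℕ)

theorem insertionPred_eq :
    insertionPred M X c k =
      if k ∈ M then none else (openEnds X (insertionPred M X c) k).elementWithAbove (c k) := by
  rw [insertionPred]
  congr 2
  exact openEnds_congr fun x hx => if_pos hx

theorem insertionPred_eq_some (h : insertionPred M X c k = some e) :
    e ∈ openEnds X (insertionPred M X c) k ∧
      #{m ∈ openEnds X (insertionPred M X c) k | e < m} = c k := by
  rw [insertionPred_eq] at h
  split_ifs at h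
  exact elementWithAbove_eq_some_iff.1 h

theorem insertionPred_mem_openEnds (x m : Fin n) (h : insertionPred M X c x = some m) :
    m ∈ openEnds X (insertionPred M X c) x :=
  (insertionPred_eq_some h).1

theorem card_openEnds_insertionPred {t : ℕ}
    (hnone : ∀ x : Fin n, ↑x < t → (insertionPred M X c x = none ↔ x ∈ M)) :
    #(openEnds X (insertionPred M X c) t) + #(X.filter fun m : Fin n => (m : ℕ) < t)
      = #(M.filter fun m : Fin n => (m : ℕ) < t) := by
  rw [card_openEnds_add_card_filter insertionPred_mem_openEnds]
  congr 1
  ext x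
  simp only [mem_filter, mem_univ, true_and]
  exact ⟨fun h => ⟨(hnone x h.1).1 h.2, h.1⟩, fun h => ⟨h.2, (hnone x h.2).2 h.1⟩⟩

theorem exists_blockPred_eq_insertionPred :
    ∃ Q : Finpartition (univ : Finset (Fin n)), blockPred Q = insertionPred M X c :=
  ⟨partitionOfPred _ fun _ _ => lt_of_mem_openEnds insertionPred_mem_openEnds,
    blockPred_partitionOfPred fun _ _ _ =>
      eq_of_eq_some_of_mem_openEnds insertionPred_mem_openEnds⟩

variable (hc : ∀ k ∉ M, c k + #(X.filter (· < k)) < #(M.filter (· < k)))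
include hc

theorem insertionPred_eq_none_iff : insertionPred M X c k = none ↔ k ∈ M := by
  induction k using WellFoundedLT.induction with
  | ind k ih =>
    by_cases hk : k ∈ M
    · simp [insertionPred_eq (k := k), hk]
    have hcard := card_openEnds_insertionPred (M := M) (X := X) (c := c) (t := k) ih
    have hck : c k < #(openEnds X (insertionPred M X c) k) := by
      have := hc k hk
      change _ + #(X.filter (· < k)) = #(M.filter (· < k)) at hcard
      omega
    obtain ⟨e, he⟩ := exists_mem_card_filter_gt_eq hck
    rw [insertionPred_eq, if_neg hk, elementWithAbove_eq_some_iff.2 he]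
    simp [hk]

/-- At time `n` no block is open any more, since `#M = #X`. -/
theorem forall_insertionPred_ne_some_iff (hMX : #M = #X) {m : Fin n} :
    (∀ x, insertionPred M X c x ≠ some m) ↔ m ∈ X := by
  refine ⟨fun h => ?_, fun hmX x hx => ?_⟩
  · by_contra hmX
    have hcard := card_openEnds_insertionPred (M := M) (X := X) (c := c) (t := n)
      fun x _ => insertionPred_eq_none_iff hc
    rw [filter_true_of_mem fun m _ => m.2, filter_true_of_mem fun m _ => m.2, hMX,
      Nat.add_eq_right, card_eq_zero] at hcard
    have hmem : m ∈ openEnds X (insertionPred M X c) n :=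
      mem_filter.2 ⟨mem_univ m, m.2, hmX, fun x _ => h x⟩
    simp [hcard] at hmem
  · exact (mem_filter.1 (insertionPred_mem_openEnds x m hx)).2.2.1 hmX

end Insertion

theorem exists_crossingsAt_eq {n : ℕ} (P : Finpartition (univ : Finset (Fin n)))
    (c : Fin n → ℕ)
    (hc : ∀ k, (k ∈ blockMins P → c k = 0) ∧ (k ∉ blockMins P → c k < openBlocks P k)) :
    ∃ Q : Finpartition (univ : Finset (Fin n)),
      blockMins Q = blockMins P ∧ blockMaxs Q = blockMaxs P ∧ ∀ k, crossingsAt Q k = c k := by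
  have hcount : ∀ k ∉ blockMins P,
      c k + #((blockMaxs P).filter (· < k)) < #((blockMins P).filter (· < k)) := fun k hk => by
    have := openBlocks_add_card_filter_blockMaxs P k
    have := (hc k).2 hk
    omega
  obtain ⟨Q, hpred⟩ :=
    exists_blockPred_eq_insertionPred (M := blockMins P) (X := blockMaxs P) (c := c)
  have hmin : blockMins Q = blockMins P := by
    ext k
    rw [← blockPred_eq_none_iff, hpred, insertionPred_eq_none_iff hcount]
  have hmax : blockMaxs Q = blockMaxs P := by
    ext k
    rw [← forall_insertionPred_ne_some_iff hcount (card_blockMins_eq_card_blockMaxs P),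
      mem_blockMaxs_iff]
    simp only [← blockPred_eq_some_iff, hpred]
  refine ⟨Q, hmin, hmax, fun k => ?_⟩
  by_cases hk : k ∈ blockMins P
  · rw [crossingsAt_eq_zero (hmin ▸ hk), (hc k).1 hk]
  obtain ⟨e, he⟩ := exists_blockPred_eq_some (hmin ▸ hk)
  rw [crossingsAt_eq_card_filter (blockPred_eq_some_iff.1 he), hmax, hpred]
  rw [hpred] at he
  exact (insertionPred_eq_some he).2

/-- The distribution of `(X_k)_k` given the block minima and maxima is stated combinatorially:
every vector in `∏_k {0, …, a_k - 1}` (with `X_k = 0` for minimal `k`) is the value of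
`(crossingsAt Q k)_k` for exactly one partition `Q` with these minima and maxima, and no other
vector occurs. -/
theorem crossing_insertion_representation (n : ℕ)
    (P0 : Finpartition (Finset.univ : Finset (Fin n))) :
    (∀ Q : Finpartition (Finset.univ : Finset (Fin n)),
      crossings Q = ∑ k ∈ Finset.univ.filter (fun k : Fin n => k ∉ blockMins Q),
        crossingsAt Q k) ∧
    (∀ c : Fin n → ℕ,
      ((Finset.univ : Finset (Finpartition (Finset.univ : Finset (Fin n)))).filter fun Q =>
          blockMins Q = blockMins P0 ∧ blockMaxs Q = blockMaxs P0 ∧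
            ∀ k, crossingsAt Q k = c k).card
        = if ∀ k : Fin n,
              (k ∈ blockMins P0 → c k = 0) ∧ (k ∉ blockMins P0 → c k < openBlocks P0 k)
          then 1 else 0) := by
  refine ⟨crossings_eq_sum, fun c => ?_⟩
  split_ifs with hc
  · obtain ⟨Q, hQ⟩ := exists_crossingsAt_eq P0 c hc
    refine card_eq_one.2 ⟨Q, eq_singleton_iff_unique_mem.2 ⟨by simpa using hQ, ?_⟩⟩
    intro Q' hQ'
    obtain ⟨hmin, hmax, hcr⟩ := (mem_filter.1 hQ').2
    exact eq_of_crossingsAt_eq (hmin.trans hQ.1.symm) (hmax.trans hQ.2.1.symm)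
      fun k => (hcr k).trans (hQ.2.2 k).symm
  · refine card_eq_zero.2 (filter_eq_empty_iff.2 fun Q _ ⟨hmin, hmax, hcr⟩ => hc fun k => ?_)
    refine ⟨fun hk => ?_, fun hk => ?_⟩
    · rw [← hcr k, crossingsAt_eq_zero (hmin ▸ hk)]
    · rw [← hcr k, ← openBlocks_congr Q k hmin hmax]
      exact crossingsAt_lt_openBlocks (hmin ▸ hk)
end
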